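/- If \mathbb{E}[\tau_0^a] < \infty, then there exists C > 0 such that almost surely, for all n large enough, \lambda_n \le (C/n^2) \cdot n^d / \sum_{x \in B_{n/2}} \tau_x. One may take any C > 2^{3d/2-2} d \pi^2 \mathbb{E}[\tau_0^a]^2. -/

import Mathlib

open Classical MeasureTheory ProbabilityTheory Filter
open Topology

noncomputable section

/-- Nearest-neighbour adjacency on `ℤ^d` (ℓ¹ distance one). -/
def Adj {d : ℕ} (x y : Fin d → ℤ) : Prop := (∑ i, |x i - y i|) = 1

/-- The box `B_n = {-n,…,n}^d` as a set. -/
def boxS (d n : ℕ) : Set (Fin d → ℤ) := {x | ∀ i, |x i| ≤ (n : ℤ)}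

/-- The box `B_n = {-n,…,n}^d` as a finset. -/
def boxF (d n : ℕ) : Finset (Fin d → ℤ) :=
  Finset.Icc (fun _ => -(n : ℤ)) (fun _ => (n : ℤ))

/-- Dirichlet form `ℰ(f,f) = (1/2) ∑_{x∼y} τ_x^a τ_y^a (f(y)-f(x))²`. -/
def dirForm {d : ℕ} (a : ℝ) (τ : (Fin d → ℤ) → ℝ) (f : (Fin d → ℤ) → ℝ) : ℝ :=
  (1/2) * ∑ᶠ p : (Fin d → ℤ) × (Fin d → ℤ),
    if Adj p.1 p.2 then τ p.1 ^ a * τ p.2 ^ a * (f p.2 - f p.1)^2 else 0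

/-- Principal Dirichlet eigenvalue on `B_n`. -/
def eig (d : ℕ) (a : ℝ) (τ : (Fin d → ℤ) → ℝ) (n : ℕ) : ℝ :=
  sInf {r | ∃ f : (Fin d → ℤ) → ℝ,
    (∀ x ∉ boxS d n, f x = 0) ∧ f ≠ 0 ∧
    r = dirForm a τ f / ∑ᶠ x, f x ^ 2 * τ x}

open Topology

/-!
Test the Rayleigh quotient with the plateau function that equals `1` on `B_{n/2+1}` and decays
linearly in the sup norm to `0` on the boundary of `B_n`. Its energy is at most about `(n/2)⁻²`
times the total conductance `∑ τ_x^a τ_y^a` of the edges in the annulus `B_n \ B_{n/2}`, and its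
mass is at least `∑_{x ∈ B_{n/2}} τ_x`. For a fixed direction, the edges starting at sites of a
fixed parity in that direction carry i.i.d. conductances of mean `E[τ_0^a]²`, so the strong law of
large numbers, run along an enumeration of `ℤ^d` in which every box is an initial segment, gives
annulus conductance `~ d E[τ_0^a]² ((2n)^d - n^d)`. This yields the bound with constant
`4 d (2^d - 1) E[τ_0^a]²`, which is at most `2^{3d/2-2} d π² E[τ_0^a]²`.
-/

section

variable {d : ℕ}

def supNorm (x : Fin d → ℤ) : ℕ := Finset.univ.sup fun i => (x i).natAbs

lemma supNorm_le_iff {x : Fin d → ℤ} {n : ℕ} : supNorm x ≤ n ↔ ∀ i, (x i).natAbs ≤ n := by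
  simp [supNorm]

lemma natAbs_le_supNorm (x : Fin d → ℤ) (i : Fin d) : (x i).natAbs ≤ supNorm x :=
  supNorm_le_iff.1 le_rfl i

lemma mem_boxF_iff {x : Fin d → ℤ} {n : ℕ} : x ∈ boxF d n ↔ supNorm x ≤ n := by
  simp only [boxF, Finset.mem_Icc, supNorm_le_iff, Pi.le_def, ← forall_and]
  exact forall_congr' fun i => by omega

lemma mem_boxS_iff {x : Fin d → ℤ} {n : ℕ} : x ∈ boxS d n ↔ supNorm x ≤ n := by
  simp only [boxS, Set.mem_ofPred_eq, supNorm_le_iff, Int.abs_eq_natAbs]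
  exact forall_congr' fun i => by omega

lemma zero_mem_boxF (n : ℕ) : (0 : Fin d → ℤ) ∈ boxF d n := by
  simp [mem_boxF_iff, supNorm_le_iff]

lemma boxF_mono : Monotone (boxF d) := fun _ _ h _ hx =>
  mem_boxF_iff.2 ((mem_boxF_iff.1 hx).trans h)

lemma card_boxF (n : ℕ) : (boxF d n).card = (2 * n + 1) ^ d := by
  simp only [boxF, Pi.card_Icc, Int.card_Icc, Finset.prod_const, Finset.card_univ,
    Fintype.card_fin]
  congr 1
  omega

lemma Adj.symm {x y : Fin d → ℤ} (h : Adj x y) : Adj y x := by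
  simpa only [Adj, abs_sub_comm] using h

lemma Adj.abs_sub_le_one {x y : Fin d → ℤ} (h : Adj x y) (i : Fin d) : |x i - y i| ≤ 1 :=
  h ▸ Finset.single_le_sum (fun j _ => abs_nonneg (x j - y j)) (Finset.mem_univ i)

lemma Adj.supNorm_le {x y : Fin d → ℤ} (h : Adj x y) : supNorm y ≤ supNorm x + 1 := by
  refine supNorm_le_iff.2 fun i => ?_
  have h1 := h.abs_sub_le_one i
  have h2 := natAbs_le_supNorm x i
  rw [abs_le] at h1
  omega

lemma adj_add_single (x : Fin d → ℤ) (i : Fin d) : Adj x (x + Pi.single i 1) := by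
  simp [Adj, Pi.single_apply, apply_ite]

lemma Adj.exists_eq_add_single {x y : Fin d → ℤ} (h : Adj x y) :
    ∃ i, y = x + Pi.single i 1 ∨ x = y + Pi.single i 1 := by
  obtain ⟨i, hi⟩ : ∃ i, x i ≠ y i := by
    by_contra! hxy
    simp [Adj, hxy] at h
  have hrest : ∀ j ∈ Finset.univ.erase i, |x j - y j| = 0 := by
    refine (Finset.sum_eq_zero_iff_of_nonneg fun j _ => abs_nonneg _).1 ?_
    have := Finset.add_sum_erase _ (fun j => |x j - y j|) (Finset.mem_univ i)
    have := h.abs_sub_le_one i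
    have := abs_pos.2 (sub_ne_zero.2 hi)
    have := Finset.sum_nonneg fun j (_ : j ∈ Finset.univ.erase i) => abs_nonneg (x j - y j)
    simp only [Adj] at h
    linarith
  have hoff : ∀ j ≠ i, x j = y j := fun j hj => by
    simpa [sub_eq_zero] using hrest j (Finset.mem_erase.2 ⟨hj, Finset.mem_univ j⟩)
  have hstep : ∀ u v : Fin d → ℤ, (∀ j ≠ i, u j = v j) → v i = u i + 1 →
      v = u + Pi.single i 1 := fun u v huv hvi => funext fun j => by
    rcases eq_or_ne j i with rfl | hj
    · simpa using hvi
    · simpa [Pi.single_eq_of_ne hj] using (huv j hj).symm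
  have hxi := abs_le.1 (h.abs_sub_le_one i)
  rcases lt_or_gt_of_ne hi with hlt | hgt
  · exact ⟨i, Or.inl (hstep x y hoff (by omega))⟩
  · exact ⟨i, Or.inr (hstep y x (fun j hj => (hoff j hj).symm) (by omega))⟩

lemma sum_product_le_two_mul_sum_edges {g : (Fin d → ℤ) × (Fin d → ℤ) → ℝ} (hg : ∀ p, 0 ≤ g p)
    (hadj : ∀ p, g p ≠ 0 → Adj p.1 p.2) (hsymm : ∀ x y, g (y, x) = g (x, y))
    (s : Finset (Fin d → ℤ)) :
    ∑ p ∈ s ×ˢ s, g p ≤ 2 * ∑ i, ∑ x ∈ s, g (x, x + Pi.single i 1) := by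
  set fwd : Fin d → _ → ℝ := fun i p => if p.2 = p.1 + Pi.single i 1 then g p else 0
  set bwd : Fin d → _ → ℝ := fun i p => if p.1 = p.2 + Pi.single i 1 then g p else 0
  have hfwd0 : ∀ i p, 0 ≤ fwd i p := fun i p => by simp only [fwd]; split_ifs <;> simp [hg]
  have hbwd0 : ∀ i p, 0 ≤ bwd i p := fun i p => by simp only [bwd]; split_ifs <;> simp [hg]
  have hcover : ∀ p, g p ≤ ∑ i, (fwd i p + bwd i p) := by
    intro p
    by_cases hp : g p = 0
    · exact hp ▸ Finset.sum_nonneg fun i _ => add_nonneg (hfwd0 i p) (hbwd0 i p)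
    obtain ⟨i, hi⟩ := (hadj p hp).exists_eq_add_single
    calc g p ≤ fwd i p + bwd i p := by
          rcases hi with h | h
          · simpa [fwd, h] using hbwd0 i p
          · simpa [bwd, h] using hfwd0 i p
      _ ≤ _ := Finset.single_le_sum (f := fun i => fwd i p + bwd i p)
          (fun j _ => add_nonneg (hfwd0 j p) (hbwd0 j p)) (Finset.mem_univ i)
  have hfwd : ∀ i, ∑ p ∈ s ×ˢ s, fwd i p ≤ ∑ x ∈ s, g (x, x + Pi.single i 1) := by
    intro i
    rw [Finset.sum_product]
    refine Finset.sum_le_sum fun x _ => ?_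
    simp only [fwd, Finset.sum_ite_eq']
    split_ifs <;> simp [hg]
  have hbwd : ∀ i, ∑ p ∈ s ×ˢ s, bwd i p ≤ ∑ x ∈ s, g (x, x + Pi.single i 1) := by
    intro i
    rw [Finset.sum_product_right]
    refine Finset.sum_le_sum fun x _ => ?_
    simp only [bwd, Finset.sum_ite_eq', hsymm]
    split_ifs <;> simp [hg]
  calc ∑ p ∈ s ×ˢ s, g p ≤ ∑ p ∈ s ×ˢ s, ∑ i, (fwd i p + bwd i p) :=
        Finset.sum_le_sum fun p _ => hcover p
    _ = ∑ i, (∑ p ∈ s ×ˢ s, fwd i p + ∑ p ∈ s ×ˢ s, bwd i p) := by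
        rw [Finset.sum_comm]
        simp only [Finset.sum_add_distrib]
    _ ≤ ∑ i, (∑ x ∈ s, g (x, x + Pi.single i 1) + ∑ x ∈ s, g (x, x + Pi.single i 1)) :=
        Finset.sum_le_sum fun i _ => add_le_add (hfwd i) (hbwd i)
    _ = 2 * ∑ i, ∑ x ∈ s, g (x, x + Pi.single i 1) := by
        rw [Finset.mul_sum]
        exact Finset.sum_congr rfl fun i _ => by ring

def conductance (a : ℝ) (τ : (Fin d → ℤ) → ℝ) (i : Fin d) (x : Fin d → ℤ) : ℝ :=
  τ x ^ a * τ (x + Pi.single i 1) ^ a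

lemma conductance_nonneg (a : ℝ) {τ : (Fin d → ℤ) → ℝ} (hτ : ∀ x, 0 ≤ τ x) (i : Fin d)
    (x : Fin d → ℤ) : 0 ≤ conductance a τ i x :=
  mul_nonneg (Real.rpow_nonneg (hτ _) _) (Real.rpow_nonneg (hτ _) _)

def boxConductance (a : ℝ) (τ : (Fin d → ℤ) → ℝ) (k : ℕ) : ℝ :=
  ∑ i, ∑ x ∈ boxF d k, conductance a τ i x

lemma dirForm_le_sum_edges (a : ℝ) {τ f : (Fin d → ℤ) → ℝ} (hτ : ∀ x, 0 ≤ τ x)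
    (s : Finset (Fin d → ℤ)) (hs : ∀ x y, Adj x y → f x ≠ f y → x ∈ s ∧ y ∈ s) :
    dirForm a τ f ≤
      ∑ i, ∑ x ∈ s, conductance a τ i x * (f (x + Pi.single i 1) - f x) ^ 2 := by
  set g : (Fin d → ℤ) × (Fin d → ℤ) → ℝ := fun p =>
    if Adj p.1 p.2 then τ p.1 ^ a * τ p.2 ^ a * (f p.2 - f p.1) ^ 2 else 0
  have hg : ∀ p, 0 ≤ g p := fun p => by
    simp only [g]
    split_ifs
    · exact mul_nonneg (mul_nonneg (Real.rpow_nonneg (hτ _) _) (Real.rpow_nonneg (hτ _) _))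
        (sq_nonneg _)
    · exact le_rfl
  have hadj : ∀ p, g p ≠ 0 → Adj p.1 p.2 ∧ f p.1 ≠ f p.2 := fun p hp => by
    simp only [g] at hp
    split_ifs at hp with h
    · exact ⟨h, fun hf => hp (by rw [hf]; ring)⟩
    · exact absurd rfl hp
  have hsymm : ∀ x y, g (y, x) = g (x, y) := fun x y => by
    simp only [g]
    by_cases h : Adj x y
    · rw [if_pos h.symm, if_pos h]; ring
    · rw [if_neg (fun h' => h h'.symm), if_neg h]
  have hsupp : Function.support g ⊆ ↑(s ×ˢ s) := fun p hp => by
    obtain ⟨hpadj, hpf⟩ := hadj p hp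
    simpa using hs p.1 p.2 hpadj hpf
  calc dirForm a τ f = 1 / 2 * ∑ p ∈ s ×ˢ s, g p := by
        rw [dirForm, finsum_eq_sum_of_support_subset g hsupp]
    _ ≤ 1 / 2 * (2 * ∑ i, ∑ x ∈ s, g (x, x + Pi.single i 1)) := by
        gcongr
        exact sum_product_le_two_mul_sum_edges hg (fun p hp => (hadj p hp).1) hsymm s
    _ = _ := by simp [g, adj_add_single, conductance]

def plateau (n ℓ : ℕ) (x : Fin d → ℤ) : ℝ :=
  max 0 (min 1 (((n : ℝ) - supNorm x) / (n - ℓ)))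

section Plateau

variable {n ℓ : ℕ} {x y : Fin d → ℤ}

lemma plateau_eq_one (h : ℓ < n) (hx : supNorm x ≤ ℓ) : plateau n ℓ x = 1 := by
  have hpos : (0 : ℝ) < n - ℓ := sub_pos.2 (by exact_mod_cast h)
  have : (1 : ℝ) ≤ (n - supNorm x) / (n - ℓ) := by
    rw [one_le_div hpos]
    gcongr
  rw [plateau, min_eq_left this, max_eq_right zero_le_one]

lemma plateau_eq_zero (h : ℓ < n) (hx : n ≤ supNorm x) : plateau n ℓ x = 0 := by
  have hpos : (0 : ℝ) < n - ℓ := sub_pos.2 (by exact_mod_cast h)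
  have : ((n : ℝ) - supNorm x) / (n - ℓ) ≤ 0 :=
    div_nonpos_of_nonpos_of_nonneg (sub_nonpos.2 (by exact_mod_cast hx)) hpos.le
  rw [plateau, max_eq_left ((min_le_right _ _).trans this)]

lemma plateau_sub_sq_le (h : ℓ < n) (hxy : Adj x y) :
    (plateau n ℓ y - plateau n ℓ x) ^ 2 ≤ (((n : ℝ) - ℓ) ^ 2)⁻¹ := by
  have hpos : (0 : ℝ) < n - ℓ := sub_pos.2 (by exact_mod_cast h)
  have hnorm : |(supNorm x : ℝ) - supNorm y| ≤ 1 := by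
    have h1 := hxy.supNorm_le
    have h2 := hxy.symm.supNorm_le
    rw [abs_le]
    constructor <;> push_cast [← Nat.cast_le (α := ℝ)] at h1 h2 <;> linarith
  have hlip : |plateau n ℓ y - plateau n ℓ x| ≤ (n - ℓ : ℝ)⁻¹ := by
    calc |plateau n ℓ y - plateau n ℓ x|
        ≤ |((n : ℝ) - supNorm y) / (n - ℓ) - ((n : ℝ) - supNorm x) / (n - ℓ)| := by
          rw [plateau, plateau, max_comm 0, max_comm 0]
          refine (abs_max_sub_max_le_abs _ _ _).trans ?_
          simpa using abs_min_sub_min_le_max 1 (((n : ℝ) - supNorm y) / (n - ℓ)) 1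
            (((n : ℝ) - supNorm x) / (n - ℓ))
      _ = |(supNorm x : ℝ) - supNorm y| / (n - ℓ) := by
          rw [← sub_div, abs_div, abs_of_pos hpos]
          ring_nf
      _ ≤ (n - ℓ : ℝ)⁻¹ := by
          rw [div_le_iff₀ hpos, inv_mul_cancel₀ hpos.ne']
          exact hnorm
  rw [← inv_pow, ← sq_abs]
  exact pow_le_pow_left₀ (abs_nonneg _) hlip 2

end Plateau

lemma dirForm_plateau_le (a : ℝ) {τ : (Fin d → ℤ) → ℝ} (hτ : ∀ x, 0 ≤ τ x) {n k : ℕ}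
    (h : k + 1 < n) :
    dirForm a τ (plateau n (k + 1)) ≤
      (((n : ℝ) - (k + 1 : ℕ)) ^ 2)⁻¹ * ∑ i, ∑ x ∈ boxF d n \ boxF d k, conductance a τ i x := by
  have hs : ∀ x y, Adj x y → plateau n (k + 1) x ≠ plateau n (k + 1) y →
      x ∈ boxF d n ∧ y ∈ boxF d n := by
    intro x y hxy hne
    simp only [mem_boxF_iff]
    by_contra! hout
    have := hxy.supNorm_le
    have := hxy.symm.supNorm_le
    refine hne ?_
    rw [plateau_eq_zero h (by omega), plateau_eq_zero h (by omega)]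
  refine (dirForm_le_sum_edges a hτ _ hs).trans ?_
  rw [Finset.mul_sum]
  refine Finset.sum_le_sum fun i _ => ?_
  rw [Finset.mul_sum, ← Finset.sum_subset Finset.sdiff_subset]
  · refine Finset.sum_le_sum fun x _ => ?_
    rw [mul_comm]
    exact mul_le_mul_of_nonneg_right (plateau_sub_sq_le h (adj_add_single x i))
      (conductance_nonneg a hτ i x)
  · intro x hxn hx
    have hxk : supNorm x ≤ k := by simpa [mem_boxF_iff, hxn] using hx
    have := (adj_add_single x i).supNorm_le
    rw [plateau_eq_one h (by omega), plateau_eq_one h (by omega)]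
    ring

lemma dirForm_nonneg (a : ℝ) {τ : (Fin d → ℤ) → ℝ} (hτ : ∀ x, 0 ≤ τ x)
    (f : (Fin d → ℤ) → ℝ) : 0 ≤ dirForm a τ f := by
  refine mul_nonneg (by norm_num) (finsum_nonneg fun p => ?_)
  split_ifs
  · exact mul_nonneg (mul_nonneg (Real.rpow_nonneg (hτ _) _) (Real.rpow_nonneg (hτ _) _))
      (sq_nonneg _)
  · exact le_rfl

lemma eig_le_rayleigh (a : ℝ) {τ : (Fin d → ℤ) → ℝ} (hτ : ∀ x, 0 ≤ τ x) {n : ℕ}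
    {f : (Fin d → ℤ) → ℝ} (hf : ∀ x ∉ boxS d n, f x = 0) (hf0 : f ≠ 0) :
    eig d a τ n ≤ dirForm a τ f / ∑ᶠ x, f x ^ 2 * τ x := by
  refine csInf_le ⟨0, ?_⟩ ⟨f, hf, hf0, rfl⟩
  rintro r ⟨g, -, -, rfl⟩
  exact div_nonneg (dirForm_nonneg a hτ g)
    (finsum_nonneg fun x => mul_nonneg (sq_nonneg _) (hτ x))

lemma sum_boxF_le_finsum_plateau {τ : (Fin d → ℤ) → ℝ} (hτ : ∀ x, 0 ≤ τ x) {n k : ℕ}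
    (h : k + 1 < n) : ∑ x ∈ boxF d k, τ x ≤ ∑ᶠ x, plateau n (k + 1) x ^ 2 * τ x := by
  have hsupp : Function.support (fun x => plateau n (k + 1) x ^ 2 * τ x) ⊆ ↑(boxF d n) := by
    intro x hx
    by_contra hxn
    simp only [Finset.mem_coe, mem_boxF_iff, not_le] at hxn
    simp [plateau_eq_zero h hxn.le] at hx
  rw [finsum_eq_sum_of_support_subset _ hsupp]
  calc ∑ x ∈ boxF d k, τ x = ∑ x ∈ boxF d k, plateau n (k + 1) x ^ 2 * τ x :=
        Finset.sum_congr rfl fun x hx => by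
          rw [plateau_eq_one h ((mem_boxF_iff.1 hx).trans k.le_succ)]
          ring
    _ ≤ ∑ x ∈ boxF d n, plateau n (k + 1) x ^ 2 * τ x :=
        Finset.sum_le_sum_of_subset_of_nonneg (boxF_mono (by omega))
          fun x _ _ => mul_nonneg (sq_nonneg _) (hτ x)

lemma eig_le_of_plateau (a : ℝ) {τ : (Fin d → ℤ) → ℝ} (hτ : ∀ x, 0 < τ x) {n k : ℕ}
    (h : k + 1 < n) :
    eig d a τ n ≤ (((n : ℝ) - (k + 1 : ℕ)) ^ 2)⁻¹ *
      (∑ i, ∑ x ∈ boxF d n \ boxF d k, conductance a τ i x) / ∑ x ∈ boxF d k, τ x := by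
  have hτ0 : ∀ x, 0 ≤ τ x := fun x => (hτ x).le
  have hmass : 0 < ∑ x ∈ boxF d k, τ x :=
    Finset.sum_pos (fun x _ => hτ x) ⟨0, zero_mem_boxF k⟩
  have hf : ∀ x ∉ boxS d n, plateau n (k + 1) x = 0 := fun x hx =>
    plateau_eq_zero h (by rw [mem_boxS_iff] at hx; omega)
  have hf0 : plateau n (k + 1) ≠ (0 : (Fin d → ℤ) → ℝ) := fun h0 => by
    simpa [plateau_eq_one h (x := 0) (by simp [supNorm])] using congrFun h0 0
  calc eig d a τ n ≤ dirForm a τ (plateau n (k + 1)) / ∑ᶠ x, plateau n (k + 1) x ^ 2 * τ x :=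
        eig_le_rayleigh a hτ0 hf hf0
    _ ≤ dirForm a τ (plateau n (k + 1)) / ∑ x ∈ boxF d k, τ x :=
        div_le_div_of_nonneg_left (dirForm_nonneg a hτ0 _) hmass
          (sum_boxF_le_finsum_plateau hτ0 h)
    _ ≤ _ := by
        gcongr
        exact dirForm_plateau_le a hτ0 h

lemma eig_le_annulus_ratio (a : ℝ) {τ : (Fin d → ℤ) → ℝ} (hτ : ∀ x, 0 < τ x) {n : ℕ}
    (hn : 3 ≤ n) :
    eig d a τ n ≤ ((n : ℝ) / (n - (n / 2 + 1 : ℕ))) ^ 2 *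
      ((boxConductance a τ n - boxConductance a τ (n / 2)) / n ^ d) / n ^ 2 *
      (n ^ d / ∑ x ∈ boxF d (n / 2), τ x) := by
  have hkn : n / 2 + 1 < n := by omega
  have hn0 : (n : ℝ) ≠ 0 := by positivity
  have hgap : (n : ℝ) - (n / 2 + 1 : ℕ) ≠ 0 := sub_ne_zero.2 (by exact_mod_cast hkn.ne')
  have hannulus : ∑ i, ∑ x ∈ boxF d n \ boxF d (n / 2), conductance a τ i x =
      boxConductance a τ n - boxConductance a τ (n / 2) := by
    simp only [boxConductance, ← Finset.sum_sub_distrib,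
      Finset.sum_sdiff_eq_sub (boxF_mono (Nat.div_le_self n 2))]
  refine (eig_le_of_plateau a hτ hkn).trans_eq ?_
  rw [hannulus]
  field_simp

section Enumeration

variable {ι : Type*} {B : ℕ → Finset ι} {r : ι → ℕ}

lemma tendsto_card_filter_atTop (hB : ∀ x k, x ∈ B k ↔ r x ≤ k) {S : Set ι}
    (hS : S.Infinite) : Tendsto (fun k => ((B k).filter (· ∈ S)).card) atTop atTop := by
  refine tendsto_atTop_atTop.2 fun K => ?_
  obtain ⟨F, hFS, hFK⟩ := hS.exists_subset_card_eq K
  refine ⟨F.sup r, fun k hk => hFK ▸ Finset.card_le_card fun x hx => ?_⟩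
  exact Finset.mem_filter.2 ⟨(hB x k).2 ((Finset.le_sup hx).trans hk), hFS hx⟩

variable [Encodable ι]

variable (B r) in
def levelOffset (k : ℕ) : ℕ := ∑ s ∈ Finset.range k, ((B s).sup Encodable.encode + 1)

variable (B r) in
/-- Encodes `x` inside the block `[levelOffset B (r x), levelOffset B (r x + 1))`, so that
the sublevel sets `B k` become initial segments of `ℕ`. -/
def rankedEncode (x : ι) : ℕ := levelOffset B (r x) + Encodable.encode x

lemma rankedEncode_lt_levelOffset_iff (hB : ∀ x k, x ∈ B k ↔ r x ≤ k) {x : ι} {k : ℕ} :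
    rankedEncode B r x < levelOffset B (k + 1) ↔ r x ≤ k := by
  have hsucc : levelOffset B (k + 1) = levelOffset B k + ((B k).sup Encodable.encode + 1) :=
    Finset.sum_range_succ _ _
  constructor
  · intro h
    by_contra! hk
    have : levelOffset B (k + 1) ≤ levelOffset B (r x) :=
      Finset.sum_le_sum_of_subset (Finset.range_subset_range.2 hk)
    rw [rankedEncode] at h
    omega
  · intro h
    have h1 : Encodable.encode x ≤ (B k).sup Encodable.encode := Finset.le_sup ((hB x k).2 h)
    have h2 : levelOffset B (r x) ≤ levelOffset B k :=
      Finset.sum_le_sum_of_subset (Finset.range_subset_range.2 h)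
    rw [rankedEncode]
    omega

lemma rankedEncode_injective (hB : ∀ x k, x ∈ B k ↔ r x ≤ k) :
    Function.Injective (rankedEncode B r) := by
  intro x y hxy
  have hlt : ∀ {x y}, rankedEncode B r x = rankedEncode B r y → r x ≤ r y := fun h =>
    (rankedEncode_lt_levelOffset_iff hB).1 (h ▸ (rankedEncode_lt_levelOffset_iff hB).2 le_rfl)
  have hr : r x = r y := le_antisymm (hlt hxy) (hlt hxy.symm)
  rw [rankedEncode, rankedEncode, hr, Nat.add_left_cancel_iff] at hxy
  exact Encodable.encode_injective hxy

lemma exists_enumeration_filter (hB : ∀ x k, x ∈ B k ↔ r x ≤ k) {S : Set ι}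
    (hS : S.Infinite) :
    ∃ e : ℕ → ι, Function.Injective e ∧ (∀ j, e j ∈ S) ∧
      ∀ k, ∃ N, (B k).filter (· ∈ S) = (Finset.range N).image e := by
  have hψ := rankedEncode_injective hB
  set T : Set ℕ := rankedEncode B r '' S
  have hT : T.Infinite := hS.image hψ.injOn
  choose e heS heψ using fun j => Nat.nth_mem_of_infinite (p := (· ∈ T)) hT j
  have he : Function.Injective e := fun j j' h =>
    Nat.nth_injective (p := (· ∈ T)) hT (by rw [← heψ, ← heψ, h])
  refine ⟨e, he, heS, fun k => ⟨Nat.count (· ∈ T) (levelOffset B (k + 1)), ?_⟩⟩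
  ext x
  simp only [Finset.mem_filter, Finset.mem_image, Finset.mem_range]
  constructor
  · rintro ⟨hxB, hxS⟩
    have hxT : rankedEncode B r x ∈ T := ⟨x, hxS, rfl⟩
    refine ⟨Nat.count (· ∈ T) (rankedEncode B r x), Nat.count_strict_mono hxT
      ((rankedEncode_lt_levelOffset_iff hB).2 ((hB x k).1 hxB)), hψ ?_⟩
    rw [heψ, Nat.nth_count hxT]
  · rintro ⟨j, hj, rfl⟩
    refine ⟨(hB _ k).2 ((rankedEncode_lt_levelOffset_iff hB).1 ?_), heS j⟩
    rw [heψ]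
    exact Nat.nth_lt_of_lt_count hj

theorem ae_tendsto_sum_filter_div_card {Ω : Type*} [MeasurableSpace Ω] {μ : Measure Ω}
    (hB : ∀ x k, x ∈ B k ↔ r x ≤ k) {S : Set ι} (hS : S.Infinite) {Y : ι → Ω → ℝ}
    (hint : ∀ x ∈ S, Integrable (Y x) μ) (hindep : S.Pairwise fun x y => IndepFun (Y x) (Y y) μ)
    (hident : ∀ x ∈ S, ∀ y ∈ S, IdentDistrib (Y x) (Y y) μ μ) {m : ℝ}
    (hmean : ∀ x ∈ S, μ[Y x] = m) :
    ∀ᵐ ω ∂μ, Tendsto (fun k => (∑ x ∈ (B k).filter (· ∈ S), Y x ω) /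
      ((B k).filter (· ∈ S)).card) atTop (𝓝 m) := by
  obtain ⟨e, he, heS, hBe⟩ := exists_enumeration_filter hB hS
  choose N hN using hBe
  have hcard : ∀ k, ((B k).filter (· ∈ S)).card = N k := fun k => by
    rw [hN, Finset.card_image_of_injective _ he, Finset.card_range]
  have hNtop : Tendsto N atTop atTop := by
    simpa only [hcard] using tendsto_card_filter_atTop hB hS
  have hSL := strong_law_ae_real (fun j => Y (e j)) (hint _ (heS 0))
    (fun j j' hne => hindep (heS j) (heS j') (he.ne hne)) (fun j => hident _ (heS j) _ (heS 0))
  rw [hmean _ (heS 0)] at hSL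
  filter_upwards [hSL] with ω hω
  refine (hω.comp hNtop).congr fun k => ?_
  rw [Function.comp_apply, hcard, hN, Finset.sum_image he.injOn]

end Enumeration

lemma Filter.Tendsto.add_div_add {α : Type*} {l : Filter α} {s₁ s₂ c₁ c₂ : α → ℝ} {L : ℝ}
    (h₁ : Tendsto (fun k => s₁ k / c₁ k) l (𝓝 L)) (h₂ : Tendsto (fun k => s₂ k / c₂ k) l (𝓝 L))
    (hc₁ : ∀ᶠ k in l, 0 < c₁ k) (hc₂ : ∀ᶠ k in l, 0 < c₂ k) :
    Tendsto (fun k => (s₁ k + s₂ k) / (c₁ k + c₂ k)) l (𝓝 L) := by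
  refine tendsto_of_tendsto_of_tendsto_of_le_of_le' (by simpa using h₁.min h₂)
    (by simpa using h₁.max h₂) ?_ ?_ <;> filter_upwards [hc₁, hc₂] with k hk₁ hk₂
  · rw [le_div_iff₀ (add_pos hk₁ hk₂)]
    have h₁' := mul_le_mul_of_nonneg_right (min_le_left (s₁ k / c₁ k) (s₂ k / c₂ k)) hk₁.le
    have h₂' := mul_le_mul_of_nonneg_right (min_le_right (s₁ k / c₁ k) (s₂ k / c₂ k)) hk₂.le
    rw [div_mul_cancel₀ _ hk₁.ne'] at h₁'
    rw [div_mul_cancel₀ _ hk₂.ne'] at h₂'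
    linarith
  · rw [div_le_iff₀ (add_pos hk₁ hk₂)]
    have h₁' := mul_le_mul_of_nonneg_right (le_max_left (s₁ k / c₁ k) (s₂ k / c₂ k)) hk₁.le
    have h₂' := mul_le_mul_of_nonneg_right (le_max_right (s₁ k / c₁ k) (s₂ k / c₂ k)) hk₂.le
    rw [div_mul_cancel₀ _ hk₁.ne'] at h₁'
    rw [div_mul_cancel₀ _ hk₂.ne'] at h₂'
    linarith

section Conductances

variable {Ω : Type*} [MeasurableSpace Ω] {P : Measure Ω} [IsProbabilityMeasure P]
  {τ : (Fin d → ℤ) → Ω → ℝ}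

lemma ae_tendsto_conductance_class (a : ℝ) (hmeas : ∀ x, Measurable (τ x))
    (hindep : iIndepFun τ P) (hid : ∀ x, IdentDistrib (τ x) (τ 0) P P)
    (hint : Integrable (fun ω => τ 0 ω ^ a) P) (i : Fin d) {T : Set (Fin d → ℤ)}
    (hT : T.Infinite) (hsep : ∀ x ∈ T, ∀ y ∈ T, x ≠ y + Pi.single i 1) :
    ∀ᵐ ω ∂P, Tendsto (fun k => (∑ x ∈ (boxF d k).filter (· ∈ T), conductance a (τ · ω) i x) /
      ((boxF d k).filter (· ∈ T)).card) atTop (𝓝 ((∫ ω, τ 0 ω ^ a ∂P) ^ 2)) := by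
  set σ : (Fin d → ℤ) → Ω → ℝ := fun x ω => τ x ω ^ a
  have hrpow : Measurable fun t : ℝ => t ^ a := by fun_prop
  have hσmeas : ∀ x, Measurable (σ x) := fun x => hrpow.comp (hmeas x)
  have hσindep : iIndepFun σ P := hindep.comp (fun _ t => t ^ a) fun _ => hrpow
  have hσid : ∀ x, IdentDistrib (σ x) (σ 0) P P := fun x => (hid x).comp hrpow
  have hσint : ∀ x, Integrable (σ x) P := fun x => (hσid x).integrable_iff.2 hint
  have hedge : ∀ x, IndepFun (σ x) (σ (x + Pi.single i 1)) P := fun x =>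
    hσindep.indepFun fun h => by simpa using congrFun h i
  refine ae_tendsto_sum_filter_div_card (B := boxF d) (r := supNorm) (fun x k => mem_boxF_iff)
    hT (Y := fun x => σ x * σ (x + Pi.single i 1)) (fun x _ => ?_) (fun x hx y hy hxy => ?_)
    (fun x _ y _ => ?_) (fun x _ => ?_)
  · exact (hedge x).integrable_mul (hσint x) (hσint _)
  · exact hσindep.indepFun_mul_mul hσmeas _ _ _ _ hxy (hsep x hx y hy)
      (fun h => hsep y hy x hx h.symm) fun h => hxy (add_right_cancel h)
  · exact (((hσid x).trans (hσid y).symm).prodMk ((hσid _).trans (hσid _).symm)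
      (hedge x) (hedge y)).comp measurable_mul
  · rw [(hedge x).integral_mul_eq_mul_integral (hσmeas x).aestronglyMeasurable
      (hσmeas _).aestronglyMeasurable, (hσid x).integral_eq,
      (hσid (x + Pi.single i 1)).integral_eq, sq]

lemma ae_tendsto_sum_conductance_div_card (a : ℝ) (hmeas : ∀ x, Measurable (τ x))
    (hindep : iIndepFun τ P) (hid : ∀ x, IdentDistrib (τ x) (τ 0) P P)
    (hint : Integrable (fun ω => τ 0 ω ^ a) P) :
    ∀ᵐ ω ∂P, ∀ i, Tendsto (fun k => (∑ x ∈ boxF d k, conductance a (τ · ω) i x) /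
      (boxF d k).card) atTop (𝓝 ((∫ ω, τ 0 ω ^ a ∂P) ^ 2)) := by
  rw [ae_all_iff]
  intro i
  set T : Set (Fin d → ℤ) := {x | Even (x i)}
  have hinf : ∀ c : ℤ, {x : Fin d → ℤ | Even (x i + c)}.Infinite := fun c =>
    Set.infinite_of_injective_forall_mem (f := fun n : ℕ => Pi.single i (2 * n - c))
      (fun n m h => by simpa using congrFun h i) (fun n => by simp)
  have hT : T.Infinite := by simpa using hinf 0
  have hTc : Tᶜ.Infinite := by simpa [T, Int.even_add_one, Set.compl_ofPred] using hinf 1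
  have hsep : ∀ x ∈ T, ∀ y ∈ T, x ≠ y + Pi.single i 1 := fun x hx y hy h => by
    simp only [T, Set.mem_ofPred_eq, h, Pi.add_apply, Pi.single_eq_same, Int.even_add_one] at hx hy
    exact hx hy
  have hsepc : ∀ x ∈ Tᶜ, ∀ y ∈ Tᶜ, x ≠ y + Pi.single i 1 := fun x hx y hy h => by
    simp only [T, Set.mem_compl_iff, Set.mem_ofPred_eq, h, Pi.add_apply, Pi.single_eq_same,
      Int.even_add_one, not_not] at hx hy
    exact hy hx
  have hpos : ∀ S : Set (Fin d → ℤ), S.Infinite →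
      ∀ᶠ k in atTop, (0 : ℝ) < ((boxF d k).filter (· ∈ S)).card := fun S hS =>
    ((tendsto_card_filter_atTop (fun x k => mem_boxF_iff) hS).eventually_gt_atTop 0).mono
      fun k hk => by exact_mod_cast hk
  filter_upwards [ae_tendsto_conductance_class a hmeas hindep hid hint i hT hsep,
    ae_tendsto_conductance_class a hmeas hindep hid hint i hTc hsepc] with ω h₁ h₂
  refine (h₁.add_div_add h₂ (hpos T hT) (hpos _ hTc)).congr fun k => ?_
  rw [← Nat.cast_add]
  congr 1
  · convert Finset.sum_filter_add_sum_filter_not (boxF d k) (· ∈ T) _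
  · convert congr_arg Nat.cast (Finset.card_filter_add_card_filter_not (s := boxF d k) (· ∈ T))

end Conductances

lemma tendsto_half_div_self : Tendsto (fun n : ℕ => ((n / 2 : ℕ) : ℝ) / n) atTop (𝓝 (1 / 2)) := by
  have hfloor := ((tendsto_nat_floor_div_atTop (R := ℝ)).comp
    ((tendsto_natCast_atTop_atTop (R := ℝ)).atTop_div_const (two_pos (α := ℝ)))).mul_const
    (1 / 2 : ℝ)
  rw [one_mul] at hfloor
  refine hfloor.congr' ?_
  filter_upwards [eventually_ne_atTop 0] with n hn
  have : (n : ℝ) ≠ 0 := by exact_mod_cast hn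
  rw [Function.comp_apply, Nat.floor_div_ofNat, Nat.floor_natCast]
  field_simp

lemma tendsto_annulus_ratio {A : ℕ → ℝ} {L : ℝ}
    (hA : Tendsto (fun k => A k / ((2 * k + 1 : ℕ) : ℝ) ^ d) atTop (𝓝 L)) :
    Tendsto (fun n : ℕ => ((n : ℝ) / (n - (n / 2 + 1 : ℕ))) ^ 2 * ((A n - A (n / 2)) / n ^ d))
      atTop (𝓝 (4 * (2 ^ d - 1) * L)) := by
  have hinv : Tendsto (fun n : ℕ => (n : ℝ)⁻¹) atTop (𝓝 0) := tendsto_inv_atTop_nhds_zero_nat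
  have hhalf := tendsto_half_div_self
  have hgap : Tendsto (fun n : ℕ => (n : ℝ) / (n - (n / 2 + 1 : ℕ))) atTop (𝓝 2) := by
    have h := ((tendsto_const_nhds (x := (1 : ℝ))).sub (hhalf.add hinv)).inv₀ (by norm_num)
    norm_num at h
    refine h.congr' ?_
    filter_upwards [eventually_ne_atTop 0] with n hn
    have : (n : ℝ) ≠ 0 := by exact_mod_cast hn
    push_cast
    field_simp
  have hout : Tendsto (fun n : ℕ => A n / n ^ d) atTop (𝓝 (L * 2 ^ d)) := by
    have hratio : Tendsto (fun n : ℕ => ((2 * n + 1 : ℕ) : ℝ) / n) atTop (𝓝 2) := by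
      have h := (tendsto_const_nhds (x := (2 : ℝ))).add hinv
      rw [add_zero] at h
      refine h.congr' ?_
      filter_upwards [eventually_ne_atTop 0] with n hn
      have : (n : ℝ) ≠ 0 := by exact_mod_cast hn
      push_cast
      field_simp
    refine (hA.mul (hratio.pow d)).congr' ?_
    filter_upwards [eventually_ne_atTop 0] with n hn
    have : (n : ℝ) ≠ 0 := by exact_mod_cast hn
    rw [div_pow, div_mul_div_cancel₀ (by positivity)]
  have hin : Tendsto (fun n : ℕ => A (n / 2) / n ^ d) atTop (𝓝 (L * 1 ^ d)) := by
    have hratio : Tendsto (fun n : ℕ => ((2 * (n / 2) + 1 : ℕ) : ℝ) / n) atTop (𝓝 1) := by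
      have h := (hhalf.const_mul 2).add hinv
      norm_num at h
      refine h.congr' ?_
      filter_upwards [eventually_ne_atTop 0] with n hn
      have : (n : ℝ) ≠ 0 := by exact_mod_cast hn
      push_cast
      field_simp
    refine ((hA.comp (Nat.tendsto_div_const_atTop two_ne_zero)).mul (hratio.pow d)).congr' ?_
    filter_upwards [eventually_ne_atTop 0] with n hn
    have : (n : ℝ) ≠ 0 := by exact_mod_cast hn
    rw [Function.comp_apply, div_pow, div_mul_div_cancel₀ (by positivity)]
  convert (hgap.pow 2).mul (hout.sub hin) using 2
  · rw [sub_div]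
  · ring

open Real in
lemma four_mul_two_pow_sub_one_le (d : ℕ) :
    4 * ((2 : ℝ) ^ d - 1) ≤ 2 ^ ((3 * (d : ℝ)) / 2 - 2) * π ^ 2 := by
  set s : ℝ := 2 ^ ((d : ℝ) / 2)
  have hs : 1 ≤ s := Real.one_le_rpow (by norm_num) (by positivity)
  have hsq : (2 : ℝ) ^ d = s ^ 2 := by
    rw [← Real.rpow_mul_natCast zero_le_two, ← Real.rpow_natCast]
    ring_nf
  have hcube : (2 : ℝ) ^ ((3 * (d : ℝ)) / 2 - 2) = s ^ 3 / 4 := by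
    rw [Real.rpow_sub zero_lt_two, ← Real.rpow_mul_natCast zero_le_two]
    norm_num
    ring_nf
  have hπ : 9 ≤ π ^ 2 := by nlinarith [pi_gt_three]
  rw [hsq, hcube]
  nlinarith [mul_le_mul_of_nonneg_left hπ (by positivity : (0 : ℝ) ≤ s ^ 3 / 4),
    sq_nonneg (s - 1), mul_nonneg (sub_nonneg.2 hs) (sq_nonneg (s - 1))]

end

theorem eig_regular_upper_bound_general (d : ℕ)
    (a : ℝ)
    {Ω : Type*} [MeasurableSpace Ω] (P : Measure Ω) [IsProbabilityMeasure P]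
    (τ : (Fin d → ℤ) → Ω → ℝ) (hmeas : ∀ x, Measurable (τ x))
    (hpos : ∀ x ω, 1 ≤ τ x ω)
    (hindep : iIndepFun τ P)
    (hid : ∀ x, IdentDistrib (τ x) (τ 0) P P)
    (hint : Integrable (fun ω => τ 0 ω ^ a) P)
    (C : ℝ)
    (hC : (2:ℝ) ^ ((3*(d:ℝ))/2 - 2) * d * Real.pi^2 * (∫ ω, τ 0 ω ^ a ∂P)^2 < C) :
    ∀ᵐ ω ∂P, ∀ᶠ n : ℕ in atTop,
      eig d a (fun x => τ x ω) n
        ≤ C / (n:ℝ)^2 * ((n:ℝ)^d / ∑ x ∈ boxF d (n/2), τ x ω) := by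
  set E := ∫ ω, τ 0 ω ^ a ∂P
  have hlim : 4 * (2 ^ d - 1) * (d * E ^ 2) < C := by
    have := mul_le_mul_of_nonneg_right (four_mul_two_pow_sub_one_le d)
      (by positivity : (0 : ℝ) ≤ d * E ^ 2)
    linarith
  filter_upwards [ae_tendsto_sum_conductance_div_card a hmeas hindep hid hint] with ω hω
  have hA : Tendsto (fun k => boxConductance a (τ · ω) k / ((2 * k + 1 : ℕ) : ℝ) ^ d) atTop
      (𝓝 (d * E ^ 2)) := by
    simpa [boxConductance, Finset.sum_div, card_boxF] using
      tendsto_finsetSum Finset.univ fun i _ => hω i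
  filter_upwards [(tendsto_annulus_ratio hA).eventually_lt_const hlim, eventually_ge_atTop 3]
    with n hn hn3
  have hmass : 0 ≤ ∑ x ∈ boxF d (n / 2), τ x ω :=
    Finset.sum_nonneg fun x _ => zero_le_one.trans (hpos x ω)
  refine (eig_le_annulus_ratio a (fun x => zero_lt_one.trans_le (hpos x ω)) hn3).trans ?_
  gcongr

/-- if `E[τ_0^a] < ∞`, then for any
`C > 2^{3d/2-2} d π² E[τ_0^a]²`, almost surely, for all `n` large enough,
`λ_n ≤ (C/n²) · n^d / ∑_{x ∈ B_{n/2}} τ_x`. -/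
theorem eig_regular_upper_bound (d : ℕ) (hd : 1 ≤ d)
    (a : ℝ) (ha : a ∈ Set.Icc (0:ℝ) 1)
    {Ω : Type*} [MeasurableSpace Ω] (P : Measure Ω) [IsProbabilityMeasure P]
    (τ : (Fin d → ℤ) → Ω → ℝ) (hmeas : ∀ x, Measurable (τ x))
    (hpos : ∀ x ω, 1 ≤ τ x ω)
    (hindep : iIndepFun τ P)
    (hid : ∀ x, IdentDistrib (τ x) (τ 0) P P)
    (hint : Integrable (fun ω => τ 0 ω ^ a) P)
    (C : ℝ)
    (hC : (2:ℝ) ^ ((3*(d:ℝ))/2 - 2) * d * Real.pi^2 * (∫ ω, τ 0 ω ^ a ∂P)^2 < C) :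
    ∀ᵐ ω ∂P, ∀ᶠ n : ℕ in atTop,
      eig d a (fun x => τ x ω) n
        ≤ C / (n:ℝ)^2 * ((n:ℝ)^d / ∑ x ∈ boxF d (n/2), τ x ω) :=
  eig_regular_upper_bound_general d a P τ hmeas hpos hindep hid hint C hC
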